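/- arXiv:2501.14560 — 3 statements merged into one kernel-verified Lean document; each statement's English description precedes it below -/
import Mathlib

section
/- Let 1 < q < p and M, c, ρ > 0, N ≥ 1. Suppose w : B_ρ \ {0} → (0,∞) satisfies w(x) ≤ c |x|^{−(p−q)/(q−1)} exp(−M |x|^{−(p−q)/(q−1)}) for all x ∈ B_ρ \ {0} ⊆ ℝ^N. Then for every r ∈ (0, ρ), the integral ∫_{B_r} w(x)^{−1/(p−1)} dx = +∞. In particular, w does not belong to the Muckenhoupt class A_p. -/
/-! With `t = ‖x‖` and `α = (p - q)/(q - 1)`, the bound on `w` gives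
`w^{-1/(p-1)} ≥ c' t^{α/(p-1)} exp (M t^{-α}/(p-1))`, and keeping a single term of the
exponential series shows this dominates `C ‖x‖^{-γ}` for any `γ`. Choosing `γ > N`, scaling gives
`∫_{B_s} ‖x‖^{-γ} ≥ C s^{N-γ} |B_1| → ∞` as `s → 0`, so `w^{-1/(p-1)}` is not integrable on any
ball around the origin, while the `A_p` condition requires it to be. -/

open Real MeasureTheory Set Metric

open Filter Topology

open scoped ENNReal Nat

/-- A nonnegative weight `w` belongs to the Muckenhoupt class `A_p` relative to a
domain `Ω` if `w` and `w^{-1/(p-1)}` are integrable on balls contained in `Ω` and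
the average inequality `⨍_B w ≤ C (⨍_B w^{-1/(p-1)})^{1-p}` holds on such balls. -/
def MemMuckenhouptOn {N : ℕ} (p : ℝ) (Ω : Set (EuclideanSpace ℝ (Fin N)))
    (w : EuclideanSpace ℝ (Fin N) → ℝ) : Prop :=
  (∀ x r, 0 < r → Metric.ball x r ⊆ Ω → MeasureTheory.IntegrableOn w (Metric.ball x r)) ∧
  (∀ x r, 0 < r → Metric.ball x r ⊆ Ω →
    MeasureTheory.IntegrableOn (fun y => w y ^ (-(1 / (p - 1)))) (Metric.ball x r)) ∧
  ∃ C > 0, ∀ x r, 0 < r → Metric.ball x r ⊆ Ω →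
    ⨍ y in Metric.ball x r, w y ≤
      C * (⨍ y in Metric.ball x r, w y ^ (-(1 / (p - 1)))) ^ (1 - p)

lemma pow_div_factorial_mul_rpow_le_exp {a t : ℝ} (ha : 0 ≤ a) (ht : 0 < t) (α : ℝ) (k : ℕ) :
    a ^ k / k ! * t ^ (-(α * k)) ≤ exp (a * t ^ (-α)) := by
  have hpow : (a * t ^ (-α)) ^ k = a ^ k * t ^ (-(α * k)) := by
    rw [mul_pow, ← rpow_natCast (t ^ (-α)), ← rpow_mul ht.le, neg_mul]
  calc a ^ k / k ! * t ^ (-(α * k)) = (a * t ^ (-α)) ^ k / k ! := by rw [hpow]; ring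
    _ ≤ exp (a * t ^ (-α)) := pow_div_factorial_le_exp _ (by positivity) k

lemma mul_rpow_le_rpow_neg_of_le_mul_exp {c M α β t v : ℝ} (hc : 0 < c) (hM : 0 ≤ M)
    (hβ : 0 ≤ β) (ht : 0 < t) (hv : 0 < v)
    (hvt : v ≤ c * t ^ (-α) * exp (-M * t ^ (-α))) (k : ℕ) :
    c ^ (-β) * ((M * β) ^ k / k !) * t ^ (α * β - α * k) ≤ v ^ (-β) := by
  have hinv : (c * t ^ (-α) * exp (-M * t ^ (-α))) ^ (-β)
      = c ^ (-β) * t ^ (α * β) * exp (M * β * t ^ (-α)) := by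
    rw [mul_rpow (by positivity) (exp_nonneg _), mul_rpow hc.le (by positivity),
      ← rpow_mul ht.le, ← exp_mul]
    ring_nf
  calc c ^ (-β) * ((M * β) ^ k / k !) * t ^ (α * β - α * k)
      = c ^ (-β) * t ^ (α * β) * ((M * β) ^ k / k ! * t ^ (-(α * k))) := by
        rw [sub_eq_add_neg, rpow_add ht]; ring
    _ ≤ c ^ (-β) * t ^ (α * β) * exp (M * β * t ^ (-α)) := by
        gcongr
        exact pow_div_factorial_mul_rpow_le_exp (by positivity) ht α k
    _ = (c * t ^ (-α) * exp (-M * t ^ (-α))) ^ (-β) := hinv.symm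
    _ ≤ v ^ (-β) := rpow_le_rpow_of_nonpos hv hvt (neg_nonpos.2 hβ)

section AddHaar

variable {E : Type*} [NormedAddCommGroup E] [NormedSpace ℝ E] [FiniteDimensional ℝ E]
  [MeasurableSpace E] [BorelSpace E] [Nontrivial E] (μ : Measure E) [μ.IsAddHaarMeasure]

lemma ofReal_mul_rpow_mul_measure_ball_le_lintegral {f : E → ℝ≥0∞} {C γ r : ℝ} (hC : 0 ≤ C)
    (hγ : 0 ≤ γ) (hf : ∀ x ∈ ball (0 : E) r \ {0}, ENNReal.ofReal (C * ‖x‖ ^ (-γ)) ≤ f x)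
    {s : ℝ} (hs : 0 < s) (hsr : s ≤ r) :
    ENNReal.ofReal (C * s ^ ((Module.finrank ℝ E : ℝ) - γ)) * μ (ball 0 1)
      ≤ ∫⁻ x in ball 0 r, f x ∂μ := by
  have hconst : ∀ x ∈ ball (0 : E) s \ {0}, ENNReal.ofReal (C * s ^ (-γ)) ≤ f x := by
    intro x hx
    have hxs : ‖x‖ ^ (-γ) ≥ s ^ (-γ) :=
      rpow_le_rpow_of_nonpos (norm_pos_iff.2 hx.2) (mem_ball_zero_iff.1 hx.1).le (neg_nonpos.2 hγ)
    refine le_trans (ENNReal.ofReal_le_ofReal ?_) (hf x ⟨ball_subset_ball hsr hx.1, hx.2⟩)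
    exact mul_le_mul_of_nonneg_left hxs hC
  calc ENNReal.ofReal (C * s ^ ((Module.finrank ℝ E : ℝ) - γ)) * μ (ball 0 1)
      = ENNReal.ofReal (C * s ^ (-γ)) * μ (ball (0 : E) s \ {0}) := by
        rw [measure_sdiff_null (measure_singleton _), Measure.addHaar_ball μ _ hs.le, ← mul_assoc,
          ← ENNReal.ofReal_mul (by positivity), mul_assoc, ← rpow_natCast, ← rpow_add hs,
          neg_add_eq_sub]
    _ = ∫⁻ _ in ball (0 : E) s \ {0}, ENNReal.ofReal (C * s ^ (-γ)) ∂μ :=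
        (setLIntegral_const _ _).symm
    _ ≤ ∫⁻ x in ball (0 : E) s \ {0}, f x ∂μ :=
        setLIntegral_mono' (measurableSet_ball.diff (measurableSet_singleton _)) hconst
    _ ≤ ∫⁻ x in ball 0 r, f x ∂μ :=
        lintegral_mono_set (sdiff_subset.trans (ball_subset_ball hsr))

theorem lintegral_ball_eq_top_of_mul_rpow_le {f : E → ℝ≥0∞} {C γ r : ℝ} (hC : 0 < C)
    (hγ : (Module.finrank ℝ E : ℝ) < γ) (hr : 0 < r)
    (hf : ∀ x ∈ ball (0 : E) r \ {0}, ENNReal.ofReal (C * ‖x‖ ^ (-γ)) ≤ f x) :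
    ∫⁻ x in ball 0 r, f x ∂μ = ∞ := by
  have hlim : Tendsto
      (fun s : ℝ ↦ ENNReal.ofReal (C * s ^ ((Module.finrank ℝ E : ℝ) - γ)) * μ (ball 0 1))
      (𝓝[>] 0) (𝓝 ∞) := by
    have h := ENNReal.tendsto_ofReal_atTop.comp
      ((tendsto_rpow_neg_nhdsGT_zero (sub_neg.2 hγ)).const_mul_atTop hC)
    simpa [ENNReal.top_mul (measure_ball_pos μ (0 : E) one_pos).ne'] using
      ENNReal.Tendsto.mul_const (b := μ (ball 0 1)) h (Or.inl ENNReal.top_ne_zero)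
  refine top_le_iff.1 (le_of_tendsto hlim ?_)
  filter_upwards [Ioc_mem_nhdsGT hr] with s hs
  exact ofReal_mul_rpow_mul_measure_ball_le_lintegral μ hC.le
    ((Nat.cast_nonneg _).trans hγ.le) hf hs.1 hs.2

end AddHaar

lemma not_memMuckenhouptOn_of_lintegral_eq_top {N : ℕ} {p : ℝ}
    {Ω : Set (EuclideanSpace ℝ (Fin N))} {w : EuclideanSpace ℝ (Fin N) → ℝ}
    {x : EuclideanSpace ℝ (Fin N)} {r : ℝ} (hr : 0 < r) (hΩ : ball x r ⊆ Ω)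
    (h : ∫⁻ y in ball x r, ENNReal.ofReal (w y ^ (-(1 / (p - 1)))) = ∞) :
    ¬ MemMuckenhouptOn p Ω w :=
  fun hw ↦ (hw.2.1 x r hr hΩ).lintegral_lt_top.ne h

/-- a weight decaying like |x|^{−(p−q)/(q−1)} exp(−M|x|^{−(p−q)/(q−1)})
has divergent ∫ w^{−1/(p−1)} on every small ball, hence is not in A_p. -/
theorem weight_not_muckenhoupt {N : ℕ} (p q M c ρ : ℝ)
    (hq : 1 < q) (hpq : q < p) (hM : 0 < M) (hc : 0 < c) (hρ : 0 < ρ) (hN : 1 ≤ N)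
    (w : EuclideanSpace ℝ (Fin N) → ℝ)
    (hwpos : ∀ x ∈ Metric.ball (0 : EuclideanSpace ℝ (Fin N)) ρ \ {0}, 0 < w x)
    (hwbd : ∀ x ∈ Metric.ball (0 : EuclideanSpace ℝ (Fin N)) ρ \ {0},
      w x ≤ c * ‖x‖ ^ (-((p - q) / (q - 1))) * Real.exp (-M * ‖x‖ ^ (-((p - q) / (q - 1))))) :
    (∀ r ∈ Set.Ioo (0 : ℝ) ρ,
      ∫⁻ x in Metric.ball (0 : EuclideanSpace ℝ (Fin N)) r,
        ENNReal.ofReal (w x ^ (-(1 / (p - 1)))) = ⊤) ∧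
    ¬ MemMuckenhouptOn p (Metric.ball (0 : EuclideanSpace ℝ (Fin N)) ρ) w := by
  set α := (p - q) / (q - 1)
  set β := 1 / (p - 1)
  have hα : 0 < α := div_pos (by linarith) (by linarith)
  have hβ : 0 < β := one_div_pos.2 (by linarith)
  have : Nontrivial (EuclideanSpace ℝ (Fin N)) :=
    have : Nonempty (Fin N) := ⟨⟨0, hN⟩⟩; inferInstance
  obtain ⟨k, hk⟩ := exists_nat_gt (β + N / α)
  have hγ : (Module.finrank ℝ (EuclideanSpace ℝ (Fin N)) : ℝ) < α * k - α * β := by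
    rw [finrank_euclideanSpace_fin, ← mul_sub, ← div_lt_iff₀' hα]
    linarith
  have hbound : ∀ x ∈ ball (0 : EuclideanSpace ℝ (Fin N)) ρ \ {0},
      ENNReal.ofReal (c ^ (-β) * ((M * β) ^ k / k !) * ‖x‖ ^ (-(α * k - α * β)))
        ≤ ENNReal.ofReal (w x ^ (-β)) := fun x hx ↦ ENNReal.ofReal_le_ofReal <| by
    rw [neg_sub]
    exact mul_rpow_le_rpow_neg_of_le_mul_exp hc hM.le hβ.le (norm_pos_iff.2 hx.2)
      (hwpos x hx) (hwbd x hx) k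
  have hdiv : ∀ r ∈ Ioo (0 : ℝ) ρ, ∫⁻ x in ball (0 : EuclideanSpace ℝ (Fin N)) r,
      ENNReal.ofReal (w x ^ (-β)) = ∞ := fun r hr ↦
    lintegral_ball_eq_top_of_mul_rpow_le volume (by positivity) hγ hr.1
      fun x hx ↦ hbound x ⟨ball_subset_ball hr.2.le hx.1, hx.2⟩
  exact ⟨hdiv, not_memMuckenhouptOn_of_lintegral_eq_top (half_pos hρ)
    (ball_subset_ball (half_le_self hρ.le)) (hdiv _ ⟨half_pos hρ, half_lt_self hρ⟩)⟩
end

section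
/- Let Ω ⊆ ℝ^N, w ∈ C¹(Ω), 1 < q < p, and φ ∈ C²(Ω) with ∇φ(x) ≠ 0 on an open set U ⊆ Ω. Suppose φ satisfies both −div(w|∇φ|^{p−2}∇φ) = λ₁ w φ^{p−1} and −div(|∇φ|^{q−2}∇φ) = λ_q φ^{q−1} pointwise on U, for constants λ₁, λ_q. Define σ := w |∇φ|^{p−q} on U. Then σ satisfies the first-order PDE (∇φ/|∇φ|²)·∇σ + (1/|∇φ|)[λ₁ (φ/|∇φ|)^{p−1} − λ_q (φ/|∇φ|)^{q−1}] σ = 0 everywhere on U. -/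
open scoped RealInnerProductSpace

noncomputable def vectorDivergence {N : ℕ}
    (F : EuclideanSpace ℝ (Fin N) → EuclideanSpace ℝ (Fin N))
    (x : EuclideanSpace ℝ (Fin N)) : ℝ :=
  ∑ i, fderiv ℝ F x (EuclideanSpace.single i 1) i

/-!
Where `∇φ ≠ 0` one has `|∇φ|^{p-2} = |∇φ|^{p-q} |∇φ|^{q-2}`, so the weighted `p`-Laplacian field
`w |∇φ|^{p-2} ∇φ` is `σ` times the `q`-Laplacian field. The product rule for the divergence and the
two eigenvalue equations then give `-λ₁ w φ^{p-1} = |∇φ|^{q-2} ∇φ·∇σ - λ_q σ φ^{q-1}`, and dividing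
by `|∇φ|^q` yields the first-order equation for `σ`.
-/

open Filter Topology

lemma ContDiffAt.differentiableAt_gradient {E : Type*} [NormedAddCommGroup E]
    [InnerProductSpace ℝ E] [CompleteSpace E] {f : E → ℝ} {x : E} (hf : ContDiffAt ℝ 2 f x) :
    DifferentiableAt ℝ (gradient f) x :=
  (InnerProductSpace.toDual ℝ E).symm.differentiableAt.comp x
    ((hf.fderiv_right (by norm_num)).differentiableAt one_ne_zero)

section Divergence

variable {N : ℕ}

lemma EuclideanSpace.sum_apply_single_mul (L : EuclideanSpace ℝ (Fin N) →L[ℝ] ℝ)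
    (v : EuclideanSpace ℝ (Fin N)) : ∑ i, L (EuclideanSpace.single i 1) * v i = L v := by
  classical
  conv_rhs => rw [← (EuclideanSpace.basisFun (Fin N) ℝ).sum_repr v]
  simp [EuclideanSpace.basisFun_apply, mul_comm]

lemma Filter.EventuallyEq.vectorDivergence_eq
    {F₁ F₂ : EuclideanSpace ℝ (Fin N) → EuclideanSpace ℝ (Fin N)}
    {x : EuclideanSpace ℝ (Fin N)} (h : F₁ =ᶠ[𝓝 x] F₂) :
    vectorDivergence F₁ x = vectorDivergence F₂ x := by
  rw [vectorDivergence, vectorDivergence, h.fderiv_eq]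

lemma vectorDivergence_smul {c : EuclideanSpace ℝ (Fin N) → ℝ}
    {F : EuclideanSpace ℝ (Fin N) → EuclideanSpace ℝ (Fin N)} {x : EuclideanSpace ℝ (Fin N)}
    (hc : DifferentiableAt ℝ c x) (hF : DifferentiableAt ℝ F x) :
    vectorDivergence (fun y => c y • F y) x
      = ⟪gradient c x, F x⟫ + c x * vectorDivergence F x := by
  simp only [vectorDivergence, fderiv_fun_smul hc hF, inner_gradient_left,
    ← EuclideanSpace.sum_apply_single_mul (fderiv ℝ c x) (F x), Finset.mul_sum,
    ← Finset.sum_add_distrib]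
  refine Finset.sum_congr rfl fun i _ => ?_
  simp only [add_apply, smul_apply, ContinuousLinearMap.smulRight_apply, PiLp.add_apply,
    PiLp.smul_apply, smul_eq_mul]
  ring

lemma vectorDivergence_mul_rpow_norm_smul {c : EuclideanSpace ℝ (Fin N) → ℝ}
    {G : EuclideanSpace ℝ (Fin N) → EuclideanSpace ℝ (Fin N)} {x : EuclideanSpace ℝ (Fin N)}
    (p q : ℝ) (hc : DifferentiableAt ℝ c x) (hG : DifferentiableAt ℝ G x) (hGx : G x ≠ 0) :
    vectorDivergence (fun y => (c y * ‖G y‖ ^ (p - 2)) • G y) x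
      = ‖G x‖ ^ (q - 2) * ⟪G x, gradient (fun y => c y * ‖G y‖ ^ (p - q)) x⟫
        + c x * ‖G x‖ ^ (p - q) * vectorDivergence (fun y => ‖G y‖ ^ (q - 2) • G y) x := by
  have hnorm : ∀ r : ℝ, DifferentiableAt ℝ (fun y => ‖G y‖ ^ r) x := fun r =>
    (hG.norm ℝ hGx).rpow_const (Or.inl (norm_ne_zero_iff.mpr hGx))
  have hfield : (fun y => (c y * ‖G y‖ ^ (p - 2)) • G y)
      =ᶠ[𝓝 x] fun y => (c y * ‖G y‖ ^ (p - q)) • ‖G y‖ ^ (q - 2) • G y := by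
    filter_upwards [hG.continuousAt.eventually_ne hGx] with y hy
    rw [smul_smul, mul_assoc, ← Real.rpow_add (norm_pos_iff.mpr hy)]
    ring_nf
  have hσ : DifferentiableAt ℝ (fun y => c y * ‖G y‖ ^ (p - q)) x := hc.mul (hnorm _)
  have hF : DifferentiableAt ℝ (fun y => ‖G y‖ ^ (q - 2) • G y) x := (hnorm _).smul hG
  rw [hfield.vectorDivergence_eq, vectorDivergence_smul hσ hF,
    real_inner_smul_right, real_inner_comm]

end Divergence

/-- Read with `n = |∇φ x|`, `a = φ x` and `s = ∇φ x · ∇σ x`. -/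
lemma first_order_form_of_divergence_identity {n a s w p q lam₁ lamq : ℝ} (hn : 0 < n)
    (ha : 0 ≤ a)
    (h : n ^ (q - 2) * s = -(lam₁ * w * a ^ (p - 1)) + w * n ^ (p - q) * (lamq * a ^ (q - 1))) :
    (n ^ 2)⁻¹ * s + n⁻¹ * (lam₁ * (a / n) ^ (p - 1) - lamq * (a / n) ^ (q - 1))
      * (w * n ^ (p - q)) = 0 := by
  have e₁ : (n ^ 2)⁻¹ = n ^ (-q) * n ^ (q - 2) := by
    rw [← Real.rpow_add hn, show -q + (q - 2) = -((2 : ℕ) : ℝ) by push_cast; ring,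
      Real.rpow_neg hn.le, Real.rpow_natCast]
  have e₂ : ∀ r : ℝ, n⁻¹ * (a / n) ^ (r - 1) = n ^ (-r) * a ^ (r - 1) := fun r => by
    rw [Real.div_rpow ha hn.le, ← Real.rpow_neg_one, div_eq_mul_inv, ← Real.rpow_neg hn.le,
      mul_comm, mul_assoc, ← Real.rpow_add hn]
    ring_nf
  have e₃ : n ^ (-p) * n ^ (p - q) = n ^ (-q) := by rw [← Real.rpow_add hn]; ring_nf
  linear_combination (n ^ (-q)) * h + s * e₁ + lam₁ * w * a ^ (p - 1) * e₃
    + w * n ^ (p - q) * (lam₁ * e₂ p - lamq * e₂ q)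

theorem sigma_first_order_pde_general {N : ℕ} (p q lam₁ lamq : ℝ)
    (Ω U : Set (EuclideanSpace ℝ (Fin N))) (hUΩ : U ⊆ Ω) (hU : IsOpen U)
    (w φ : EuclideanSpace ℝ (Fin N) → ℝ)
    (hw : ContDiffOn ℝ 1 w Ω) (hφ : ContDiffOn ℝ 2 φ Ω)
    (hgrad : ∀ x ∈ U, gradient φ x ≠ 0) (hφpos : ∀ x ∈ U, 0 < φ x)
    (hP : ∀ x ∈ U,
      - vectorDivergence (fun y => (w y * ‖gradient φ y‖ ^ (p - 2)) • gradient φ y) x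
        = lam₁ * w x * φ x ^ (p - 1))
    (hQ : ∀ x ∈ U,
      - vectorDivergence (fun y => (‖gradient φ y‖ ^ (q - 2)) • gradient φ y) x
        = lamq * φ x ^ (q - 1)) :
    ∀ x ∈ U,
      ⟪(‖gradient φ x‖ ^ 2)⁻¹ • gradient φ x,
          gradient (fun y => w y * ‖gradient φ y‖ ^ (p - q)) x⟫
        + (‖gradient φ x‖)⁻¹ *
            (lam₁ * (φ x / ‖gradient φ x‖) ^ (p - 1)
              - lamq * (φ x / ‖gradient φ x‖) ^ (q - 1)) *
            (w x * ‖gradient φ x‖ ^ (p - q)) = 0 := by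
  intro x hx
  have hΩ : Ω ∈ 𝓝 x := mem_of_superset (hU.mem_nhds hx) hUΩ
  have hdiv := vectorDivergence_mul_rpow_norm_smul p q
    ((hw.contDiffAt hΩ).differentiableAt one_ne_zero)
    (hφ.contDiffAt hΩ).differentiableAt_gradient (hgrad x hx)
  rw [real_inner_smul_left]
  refine first_order_form_of_divergence_identity (norm_pos_iff.mpr (hgrad x hx))
    (hφpos x hx).le ?_
  linear_combination -hdiv - hP x hx + w x * ‖gradient φ x‖ ^ (p - q) * hQ x hx

/-- if φ solves both the weighted p-Laplacian and the q-Laplacian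
eigenvalue equations on U, then σ = w|∇φ|^{p−q} solves the first-order PDE
E·∇σ + g σ = 0 on U. -/
theorem sigma_first_order_pde {N : ℕ} (p q lam₁ lamq : ℝ) (hq : 1 < q) (hpq : q < p)
    (Ω U : Set (EuclideanSpace ℝ (Fin N))) (hUΩ : U ⊆ Ω) (hU : IsOpen U)
    (w φ : EuclideanSpace ℝ (Fin N) → ℝ)
    (hw : ContDiffOn ℝ 1 w Ω) (hφ : ContDiffOn ℝ 2 φ Ω)
    (hgrad : ∀ x ∈ U, gradient φ x ≠ 0) (hφpos : ∀ x ∈ U, 0 < φ x)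
    (hP : ∀ x ∈ U,
      - vectorDivergence (fun y => (w y * ‖gradient φ y‖ ^ (p - 2)) • gradient φ y) x
        = lam₁ * w x * φ x ^ (p - 1))
    (hQ : ∀ x ∈ U,
      - vectorDivergence (fun y => (‖gradient φ y‖ ^ (q - 2)) • gradient φ y) x
        = lamq * φ x ^ (q - 1)) :
    ∀ x ∈ U,
      ⟪(‖gradient φ x‖ ^ 2)⁻¹ • gradient φ x,
          gradient (fun y => w y * ‖gradient φ y‖ ^ (p - q)) x⟫
        + (‖gradient φ x‖)⁻¹ *
            (lam₁ * (φ x / ‖gradient φ x‖) ^ (p - 1)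
              - lamq * (φ x / ‖gradient φ x‖) ^ (q - 1)) *
            (w x * ‖gradient φ x‖ ^ (p - q)) = 0 :=
  sigma_first_order_pde_general p q lam₁ lamq Ω U hUΩ hU w φ hw hφ hgrad hφpos hP hQ
end

section
/- Let 1 < q < p, k₁ > 0, and let x : (0,T) → ℝ^N \ {0} be a C¹ curve with ẋ(τ) = ∇φ(x(τ))/|∇φ(x(τ))|² for a C¹ function φ whose gradient satisfies |∇φ(y)| ≥ k₁ |y|^{1/(q−1)} along the curve, and such that (x/|x|)·(∇φ/|∇φ|²) ≤ 0 along the curve (the curve moves toward the origin). Then for every t ∈ (0,T): ∫₀^t |x(τ)|^{−p/(q−1)} dτ ≥ k₁ · (q−1)/(p−q) · [ |x(t)|^{−(p−q)/(q−1)} − |x(0⁺)|^{−(p−q)/(q−1)} ]. -/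
open Set intervalIntegral MeasureTheory
open scoped RealInnerProductSpace

/-! With `α = (p - q) / (q - 1)`, the function `F τ = (k₁ / α) * ‖x τ‖ ^ (-α)` has derivative
`-k₁ * ‖x‖ ^ (-α - 2) * ⟪x, ẋ⟫`. By Cauchy–Schwarz and `‖ẋ‖ = ‖G‖⁻¹` this is at most
`k₁ * ‖x‖ ^ (-α - 1) / ‖G‖`, and the lower bound `k₁ * ‖x‖ ^ (1 / (q - 1)) ≤ ‖G‖` turns it into
`‖x‖ ^ (-p / (q - 1))`. Integrating `F' ≤ ‖x‖ ^ (-p / (q - 1))` over `(0, t)` gives the bound. -/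

section

variable {E : Type*} [NormedAddCommGroup E] [InnerProductSpace ℝ E]

theorem HasDerivAt.norm {f : ℝ → E} {f' : E} {t : ℝ} (hf : HasDerivAt f f' t) (h0 : f t ≠ 0) :
    HasDerivAt (fun s => ‖f s‖) (⟪f t, f'⟫ / ‖f t‖) t := by
  have h := hf.norm_sq.sqrt (by positivity)
  simp only [Real.sqrt_sq (norm_nonneg _)] at h
  convert h using 1
  field_simp

theorem HasDerivAt.exists_hasDerivAt_const_mul_norm_rpow_le {f : ℝ → E} {f' : E} {t : ℝ} (c a : ℝ)
    (hf : HasDerivAt f f' t) (h0 : f t ≠ 0) :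
    ∃ d, HasDerivAt (fun s => c * ‖f s‖ ^ a) d t ∧ d ≤ |c * a| * ‖f t‖ ^ (a - 1) * ‖f'‖ := by
  have hr : 0 < ‖f t‖ := norm_pos_iff.2 h0
  refine ⟨_, ((hf.norm h0).rpow_const (p := a) (Or.inl hr.ne')).const_mul c, ?_⟩
  have hcs : ⟪f t, f'⟫ / ‖f t‖ * (c * a) ≤ ‖f'‖ * |c * a| := by
    calc ⟪f t, f'⟫ / ‖f t‖ * (c * a) ≤ |⟪f t, f'⟫ / ‖f t‖ * (c * a)| := le_abs_self _
      _ = |⟪f t, f'⟫| / ‖f t‖ * |c * a| := by rw [abs_mul, abs_div, abs_norm]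
      _ ≤ ‖f t‖ * ‖f'‖ / ‖f t‖ * |c * a| := by
        gcongr; exact abs_real_inner_le_norm _ _
      _ = ‖f'‖ * |c * a| := by field_simp
  calc c * (⟪f t, f'⟫ / ‖f t‖ * a * ‖f t‖ ^ (a - 1))
      = ‖f t‖ ^ (a - 1) * (⟪f t, f'⟫ / ‖f t‖ * (c * a)) := by ring
    _ ≤ ‖f t‖ ^ (a - 1) * (‖f'‖ * |c * a|) := by gcongr
    _ = |c * a| * ‖f t‖ ^ (a - 1) * ‖f'‖ := by ring

theorem const_mul_norm_rpow_sub_le_integral {f f' : ℝ → E} {g : ℝ → ℝ} {a b : ℝ} (c e : ℝ)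
    (hab : a ≤ b) (hcont : ContinuousOn f (Icc a b)) (h0 : ∀ t ∈ Icc a b, f t ≠ 0)
    (hderiv : ∀ t ∈ Ioo a b, HasDerivAt f (f' t) t) (hg : IntegrableOn g (Icc a b))
    (hbound : ∀ t ∈ Ioo a b, |c * e| * ‖f t‖ ^ (e - 1) * ‖f' t‖ ≤ g t) :
    c * (‖f b‖ ^ e - ‖f a‖ ^ e) ≤ ∫ t in a..b, g t := by
  choose! d hd hdle using fun t (ht : t ∈ Ioo a b) =>
    (hderiv t ht).exists_hasDerivAt_const_mul_norm_rpow_le c e (h0 t (Ioo_subset_Icc_self ht))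
  have hFcont : ContinuousOn (fun t => c * ‖f t‖ ^ e) (Icc a b) :=
    continuousOn_const.mul (hcont.norm.rpow_const fun t ht => Or.inl (norm_ne_zero_iff.2 (h0 t ht)))
  rw [mul_sub]
  exact sub_le_integral_of_hasDeriv_right_of_le hab hFcont
    (fun t ht => (hd t ht).hasDerivWithinAt) hg fun t ht => (hdle t ht).trans (hbound t ht)

theorem norm_inv_norm_sq_smul (v : E) : ‖(‖v‖ ^ 2)⁻¹ • v‖ = ‖v‖⁻¹ := by
  rw [norm_smul, norm_inv, norm_pow, norm_norm, sq, mul_inv, mul_assoc]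
  rcases eq_or_ne ‖v‖ 0 with h | h
  · simp [h]
  · rw [inv_mul_cancel₀ h, mul_one]

end

theorem Real.mul_rpow_mul_inv_le_rpow {k r g p q : ℝ} (hk : 0 ≤ k) (hr : 0 < r) (hq : q ≠ 1)
    (hg : k * r ^ (1 / (q - 1)) ≤ g) :
    k * r ^ (-((p - q) / (q - 1)) - 1) * g⁻¹ ≤ r ^ (-(p / (q - 1))) := by
  have hq1 : q - 1 ≠ 0 := sub_ne_zero.2 hq
  have hexp : r ^ (-((p - q) / (q - 1)) - 1) = r ^ (-(p / (q - 1))) * r ^ (1 / (q - 1)) := by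
    rw [← Real.rpow_add hr]
    congr 1
    field_simp
    ring
  have hle_one : k * r ^ (1 / (q - 1)) * g⁻¹ ≤ 1 :=
    mul_inv_le_one_of_le₀ hg ((by positivity : 0 ≤ k * r ^ (1 / (q - 1))).trans hg)
  calc k * r ^ (-((p - q) / (q - 1)) - 1) * g⁻¹
      = r ^ (-(p / (q - 1))) * (k * r ^ (1 / (q - 1)) * g⁻¹) := by rw [hexp]; ring
    _ ≤ r ^ (-(p / (q - 1))) * 1 := by gcongr
    _ = r ^ (-(p / (q - 1))) := mul_one _

theorem characteristic_integral_lower_bound_general {N : ℕ} (p q k₁ T : ℝ)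
    (hq : 1 < q) (hpq : q < p) (hk : 0 < k₁)
    (x : ℝ → EuclideanSpace ℝ (Fin N))
    (G : EuclideanSpace ℝ (Fin N) → EuclideanSpace ℝ (Fin N))
    (hxc : ContinuousOn x (Set.Ico 0 T)) (hx0 : x 0 ≠ 0)
    (hne : ∀ τ ∈ Set.Ioo 0 T, x τ ≠ 0)
    (hx' : ∀ τ ∈ Set.Ioo 0 T, HasDerivAt x ((‖G (x τ)‖ ^ 2)⁻¹ • G (x τ)) τ)
    (hGlow : ∀ τ ∈ Set.Ioo 0 T, k₁ * ‖x τ‖ ^ (1 / (q - 1)) ≤ ‖G (x τ)‖) :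
    ∀ t ∈ Set.Ioo 0 T,
      k₁ * (q - 1) / (p - q) *
          (‖x t‖ ^ (-((p - q) / (q - 1))) - ‖x 0‖ ^ (-((p - q) / (q - 1))))
        ≤ ∫ τ in (0 : ℝ)..t, ‖x τ‖ ^ (-(p / (q - 1))) := by
  rintro t ⟨ht0, htT⟩
  have hIcc : Icc 0 t ⊆ Ico 0 T := Icc_subset_Ico_right htT
  have hIoo : Ioo 0 t ⊆ Ioo 0 T := Ioo_subset_Ioo_right htT.le
  have hx_ne : ∀ τ ∈ Icc 0 t, x τ ≠ 0 := by
    rintro τ ⟨hτ0, hτt⟩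
    rcases hτ0.eq_or_lt with rfl | hτ0
    · exact hx0
    · exact hne τ ⟨hτ0, hτt.trans_lt htT⟩
  have hcont : ContinuousOn x (Icc 0 t) := hxc.mono hIcc
  have hint : IntegrableOn (fun τ => ‖x τ‖ ^ (-(p / (q - 1)))) (Icc 0 t) :=
    (hcont.norm.rpow_const fun τ hτ =>
      Or.inl (norm_ne_zero_iff.2 (hx_ne τ hτ))).integrableOn_compact isCompact_Icc
  have hcoef : |k₁ * (q - 1) / (p - q) * -((p - q) / (q - 1))| = k₁ := by
    have hq1 : q - 1 ≠ 0 := by linarith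
    have hpq1 : p - q ≠ 0 := by linarith
    rw [show k₁ * (q - 1) / (p - q) * -((p - q) / (q - 1)) = -k₁ by field_simp, abs_neg,
      abs_of_pos hk]
  refine const_mul_norm_rpow_sub_le_integral _ _ ht0.le hcont hx_ne (fun τ hτ => hx' τ (hIoo hτ))
    hint fun τ hτ => ?_
  rw [hcoef, norm_inv_norm_sq_smul]
  exact Real.mul_rpow_mul_inv_le_rpow hk.le (norm_pos_iff.2 (hne τ (hIoo hτ))) hq.ne'
    (hGlow τ (hIoo hτ))

/-- lower bound for ∫₀^t |x(τ)|^{−p/(q−1)} dτ along a characteristic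
curve moving toward the origin. -/
theorem characteristic_integral_lower_bound {N : ℕ} (p q k₁ T : ℝ)
    (hq : 1 < q) (hpq : q < p) (hk : 0 < k₁) (hT : 0 < T)
    (x : ℝ → EuclideanSpace ℝ (Fin N))
    (G : EuclideanSpace ℝ (Fin N) → EuclideanSpace ℝ (Fin N))
    (hxc : ContinuousOn x (Set.Ico 0 T)) (hx0 : x 0 ≠ 0)
    (hne : ∀ τ ∈ Set.Ioo 0 T, x τ ≠ 0)
    (hx' : ∀ τ ∈ Set.Ioo 0 T, HasDerivAt x ((‖G (x τ)‖ ^ 2)⁻¹ • G (x τ)) τ)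
    (hGlow : ∀ τ ∈ Set.Ioo 0 T, k₁ * ‖x τ‖ ^ (1 / (q - 1)) ≤ ‖G (x τ)‖)
    (htoward : ∀ τ ∈ Set.Ioo 0 T,
      ⟪(‖x τ‖)⁻¹ • x τ, (‖G (x τ)‖ ^ 2)⁻¹ • G (x τ)⟫ ≤ 0) :
    ∀ t ∈ Set.Ioo 0 T,
      k₁ * (q - 1) / (p - q) *
          (‖x t‖ ^ (-((p - q) / (q - 1))) - ‖x 0‖ ^ (-((p - q) / (q - 1))))
        ≤ ∫ τ in (0 : ℝ)..t, ‖x τ‖ ^ (-(p / (q - 1))) :=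
  characteristic_integral_lower_bound_general p q k₁ T hq hpq hk x G hxc hx0 hne hx' hGlow
end
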